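/- Let (Cⁿ)_{n ∈ ℤ} and (C'ⁿ)_{n ∈ ℤ} be families of normed complex vector spaces, and let dⁿ : Cⁿ → Cⁿ⁺¹ and d'ⁿ : C'ⁿ → C'ⁿ⁺¹ be (not necessarily continuous) linear maps with dⁿ⁺¹ ∘ dⁿ = 0 and d'ⁿ⁺¹ ∘ d'ⁿ = 0. Let T = (Tⁿ : Cⁿ → C'ⁿ) and S = (Sⁿ : C'ⁿ → Cⁿ) be continuous linear cochain maps (Tⁿ⁺¹ ∘ dⁿ = d'ⁿ ∘ Tⁿ and Sⁿ⁺¹ ∘ d'ⁿ = dⁿ ∘ Sⁿ), and suppose there exist linear maps zⁿ : Cⁿ → Cⁿ⁻¹ and yⁿ : C'ⁿ → C'ⁿ⁻¹ such that x − Sⁿ(Tⁿ(x)) = dⁿ⁻¹(zⁿ(x)) + zⁿ⁺¹(dⁿ(x)) for all x ∈ Cⁿ and x' − Tⁿ(Sⁿ(x')) = d'ⁿ⁻¹(yⁿ(x')) + yⁿ⁺¹(d'ⁿ(x')) for all x' ∈ C'ⁿ. Define the reduced cohomology H̄ⁿ(C) := ker(dⁿ) / (ker(dⁿ) ∩ closure(range(dⁿ⁻¹)))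 and H̄ⁿ(C') := ker(d'ⁿ) / (ker(d'ⁿ) ∩ closure(range(d'ⁿ⁻¹))). Then for every n, Tⁿ maps ker(dⁿ) into ker(d'ⁿ) and ker(dⁿ) ∩ closure(range(dⁿ⁻¹)) into ker(d'ⁿ) ∩ closure(range(d'ⁿ⁻¹)), and the induced linear map H̄ⁿ(C) → H̄ⁿ(C') is bijective. -/
import Mathlib


/-- Chain homotopy equivalences induce isomorphisms in reduced cohomology of complexes
of normed spaces.  Given complexes `(Cⁿ, dⁿ)` and `(C'ⁿ, d'ⁿ)` of normed complex vector
spaces with possibly unbounded differentials, continuous linear cochain maps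
`T : C → C'` and `S : C' → C`, and (not necessarily continuous) linear homotopies
`z`, `y` with `1 − S T = d z + z d` and `1 − T S = d' y + y d'`, the map `T` preserves
cocycles and the closure of coboundaries (intersected with the cocycles), and the
induced map on reduced cohomology `ker dⁿ / (ker dⁿ ∩ cl(im dⁿ⁻¹))` is bijective in
every degree.  Bijectivity of the induced quotient map is stated elementwise; degrees
are parametrized as `n + 1` with `n` ranging over `ℤ`, which covers every degree. -/
theorem homotopy_equivalence_induces_reduced_cohomology_iso
    (C C' : ℤ → Type*)
    [∀ n, NormedAddCommGroup (C n)] [∀ n, NormedSpace ℂ (C n)]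
    [∀ n, NormedAddCommGroup (C' n)] [∀ n, NormedSpace ℂ (C' n)]
    (d : ∀ n : ℤ, C n →ₗ[ℂ] C (n + 1)) (d' : ∀ n : ℤ, C' n →ₗ[ℂ] C' (n + 1))
    (hd : ∀ (n : ℤ) (x : C n), d (n + 1) (d n x) = 0)
    (hd' : ∀ (n : ℤ) (x' : C' n), d' (n + 1) (d' n x') = 0)
    (T : ∀ n : ℤ, C n →L[ℂ] C' n) (S : ∀ n : ℤ, C' n →L[ℂ] C n)
    (hT : ∀ (n : ℤ) (x : C n), T (n + 1) (d n x) = d' n (T n x))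
    (hS : ∀ (n : ℤ) (x' : C' n), S (n + 1) (d' n x') = d n (S n x'))
    (z : ∀ n : ℤ, C (n + 1) →ₗ[ℂ] C n) (y : ∀ n : ℤ, C' (n + 1) →ₗ[ℂ] C' n)
    (hz : ∀ (n : ℤ) (x : C (n + 1)),
      x - S (n + 1) (T (n + 1) x) = d n (z n x) + z (n + 1) (d (n + 1) x))
    (hy : ∀ (n : ℤ) (x' : C' (n + 1)),
      x' - T (n + 1) (S (n + 1) x') = d' n (y n x') + y (n + 1) (d' (n + 1) x')) :
    ∀ n : ℤ,
      (∀ x : C (n + 1), d (n + 1) x = 0 → d' (n + 1) (T (n + 1) x) = 0) ∧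
      (∀ x : C (n + 1), d (n + 1) x = 0 → x ∈ closure (Set.range (d n)) →
        T (n + 1) x ∈ closure (Set.range (d' n))) ∧
      (∀ x : C (n + 1), d (n + 1) x = 0 →
        T (n + 1) x ∈ closure (Set.range (d' n)) → x ∈ closure (Set.range (d n))) ∧
      (∀ x' : C' (n + 1), d' (n + 1) x' = 0 →
        ∃ x : C (n + 1), d (n + 1) x = 0 ∧
          x' - T (n + 1) x ∈ closure (Set.range (d' n))) := by

  intro n
  have clsub : ∀ (m : ℤ), closure (Set.range (d' m)) =
      ((LinearMap.range (d' m)).topologicalClosure : Set (C' (m+1))) := by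
    intro m; rw [Submodule.topologicalClosure_coe, LinearMap.coe_range]
  have clsubC : ∀ (m : ℤ), closure (Set.range (d m)) =
      ((LinearMap.range (d m)).topologicalClosure : Set (C (m+1))) := by
    intro m; rw [Submodule.topologicalClosure_coe, LinearMap.coe_range]
  refine ⟨?_, ?_, ?_, ?_⟩
  · intro x hx
    have := hT (n+1) x
    rw [hx, map_zero] at this
    exact this.symm
  · intro x _ hcl
    refine map_mem_closure (T (n+1)).continuous hcl ?_
    rintro w ⟨u, rfl⟩
    exact ⟨T n u, (hT n u).symm⟩
  · intro x hx hcl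
    have h1 : x - S (n+1) (T (n+1) x) ∈ closure (Set.range (d n)) := by
      apply subset_closure
      refine ⟨z n x, ?_⟩
      rw [hz n x, hx, map_zero, add_zero]
    have h2 : S (n+1) (T (n+1) x) ∈ closure (Set.range (d n)) := by
      refine map_mem_closure (S (n+1)).continuous hcl ?_
      rintro w ⟨u, rfl⟩
      exact ⟨S n u, (hS n u).symm⟩
    rw [clsubC] at h1 h2 ⊢
    have := Submodule.add_mem _ h1 h2
    rwa [sub_add_cancel] at this
  · intro x' hx'
    refine ⟨S (n+1) x', ?_, ?_⟩
    · have := hS (n+1) x'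
      rw [hx', map_zero] at this
      exact this.symm
    · apply subset_closure
      refine ⟨y n x', ?_⟩
      rw [hy n x', hx', map_zero, add_zero]
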